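/- Let p ≥ 2 be an integer and let i ∈ {1,…,2^{p+4}}ⁿ. Then the set A_p^{(i)} + 𝓒_{2^p} is 2^{p+3}√n-admissible Whitney. -/

import Mathlib

open MeasureTheory Metric Set

noncomputable section

/-- Euclidean space ℝⁿ. -/
abbrev E (n : ℕ) := EuclideanSpace ℝ (Fin n)

/-- m(x) = min {1, 1/|x|} (with value 1 at x = 0). -/
def mFun {n : ℕ} (x : E n) : ℝ := if ‖x‖ ≤ 1 then 1 else ‖x‖⁻¹

/-- The dyadic cube `2^{-m}(v + [0,1)ⁿ)` of `Δ_m`. -/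
def dyadicCube (n : ℕ) (m : ℤ) (v : Fin n → ℤ) : Set (E n) :=
  {y | ∀ i, y i ∈ Set.Ico ((2 : ℝ) ^ (-m) * v i) ((2 : ℝ) ^ (-m) * (v i + 1))}

/-- The layers `L_0 = [-1,1)ⁿ` and `L_l = [-2^l,2^l)ⁿ \ [-2^{l-1},2^{l-1})ⁿ` for `l ≥ 1`. -/
def layer (n : ℕ) (l : ℕ) : Set (E n) :=
  if l = 0 then {y | ∀ i, y i ∈ Set.Ico (-1 : ℝ) 1}
  else {y | ∀ i, y i ∈ Set.Ico (-(2 : ℝ) ^ l) ((2 : ℝ) ^ l)} \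
       {y | ∀ i, y i ∈ Set.Ico (-(2 : ℝ) ^ (l - 1)) ((2 : ℝ) ^ (l - 1))}

/-- `A + 𝓒_α`: the set of centres of balls in `𝓑_α` that intersect `A`. -/
def plusC (n : ℕ) (α : ℝ) (A : Set (E n)) : Set (E n) :=
  {z | ∃ r : ℝ, 0 ≤ r ∧ r ≤ α * mFun z ∧ (ball z r ∩ A).Nonempty}

/-- A set `A ⊆ ℝⁿ` is `λ`-admissible Whitney if `d(x, ∁A) ≤ λ m(x)` for all `x ∈ A`. -/
def AdmWhitney (n : ℕ) (lam : ℝ) (A : Set (E n)) : Prop :=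
  ∀ x ∈ A, infDist x Aᶜ ≤ lam * mFun x

/-- `A_p^{(i)}`: the union of all cubes `Q = 2^{-l}(v + [0,1)ⁿ) ∈ Δ^γ_{0,l}` with `l ≥ p+2`
having label `i`, where (with `κ = p+4`) the label of such a cube is
`(v j mod 2^{p+4}) + 1 ∈ {1,…,2^{p+4}}ⁿ`. -/
def Ap (n p : ℕ) (i : Fin n → ℤ) : Set (E n) :=
  ⋃ (l : ℕ) (_ : p + 2 ≤ l) (v : Fin n → ℤ)
    (_ : dyadicCube n l v ⊆ layer n l)
    (_ : ∀ j, v j % (2 ^ (p + 4) : ℤ) + 1 = i j),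
    dyadicCube n l v


/-!
Let `x ∈ A + 𝓒_{2^p}` have sup-norm `W`. A point of `A` within `2^p m(x)` of `x` forces
`2^{k-1} + 2^p - 1 ≤ W ≤ 3 · 2^{k-1}` for some `k ≥ p + 1`, and then the labelled cubes of
layers other than `k` and `k + 1` are too far from `x` to matter. In any coordinate, the
labelled cubes of layers `k + 1` and `k` project into periodic families of period
`P = 2^{p+3-k}` and `2P`. Moving one coordinate of `x` by at most `P/2 + R` to a point at
distance `R` from both families, where `R` is `2^p m(y)` plus half a side length, gives
`y ∉ A + 𝓒_{2^p}` with `|x - y| ≤ 2^{p+3} / W ≤ 2^{p+3} √n m(x)`.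
-/

lemma PiLp.norm_ofLp_le {ι : Type*} [Fintype ι] {p : ENNReal} [Fact (1 ≤ p)] {β : ι → Type*}
    [∀ i, SeminormedAddCommGroup (β i)] (x : PiLp p β) : ‖WithLp.ofLp x‖ ≤ ‖x‖ :=
  (pi_norm_le_iff_of_nonneg (norm_nonneg x)).2 (PiLp.norm_apply_le x)

lemma PiLp.abs_norm_ofLp_sub_norm_ofLp_le_dist {ι : Type*} [Fintype ι] {p : ENNReal}
    [Fact (1 ≤ p)] {β : ι → Type*} [∀ i, SeminormedAddCommGroup (β i)] (x y : PiLp p β) :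
    |‖WithLp.ofLp x‖ - ‖WithLp.ofLp y‖| ≤ dist x y := by
  rw [dist_eq_norm]
  exact (abs_norm_sub_norm_le _ _).trans (PiLp.norm_ofLp_le (x - y))

lemma EuclideanSpace.norm_le_sqrt_card_mul_norm_ofLp {ι : Type*} [Fintype ι]
    (x : EuclideanSpace ℝ ι) : ‖x‖ ≤ √(Fintype.card ι) * ‖WithLp.ofLp x‖ := by
  rw [EuclideanSpace.norm_eq, ← Real.sqrt_sq (norm_nonneg (WithLp.ofLp x)),
    ← Real.sqrt_mul (Nat.cast_nonneg _)]
  refine Real.sqrt_le_sqrt ?_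
  calc ∑ i, ‖x i‖ ^ 2 ≤ ∑ _i : ι, ‖WithLp.ofLp x‖ ^ 2 := by
        gcongr with i; exact norm_le_pi_norm (WithLp.ofLp x) i
    _ = _ := by simp

lemma le_abs_mul_add_of_le {Q R c : ℝ} (hQ : 0 < Q) (hRc : R ≤ c) (hcQ : c ≤ Q - R)
    (j : ℤ) : R ≤ |Q * j + c| := by
  rcases le_or_gt 0 j with hj | hj
  · have : (0 : ℝ) ≤ Q * j := mul_nonneg hQ.le (by exact_mod_cast hj)
    exact le_abs.mpr (Or.inl (by linarith))
  · have : (j : ℝ) ≤ -1 := by exact_mod_cast (by omega : j ≤ -1)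
    exact le_abs.mpr (Or.inr (by nlinarith))

/- Take the midpoint `m` of the gap of `α + Pℤ` containing `u`. If `m` is within `R` of
`β + 2Pℤ`, take instead the point at distance `R` beyond the end of that gap on the side of `u`:
`β + 2Pℤ` has no further point within `3P/2` of `m`. -/
lemma exists_near_far_from_lattices {P R : ℝ} (hP : 0 < P) (hR : 0 ≤ R) (hRP : 2 * R ≤ P)
    (α β u : ℝ) :
    ∃ s, |s - u| ≤ P / 2 + R ∧ (∀ q : ℤ, R ≤ |s - (α + P * q)|) ∧
      (∀ q : ℤ, R ≤ |s - (β + 2 * P * q)|) := by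
  set z := ⌊(u - α) / P⌋
  have hz : P * z ≤ u - α ∧ u - α < P * (z + 1) := by
    constructor
    · rw [← le_div_iff₀' hP]; exact Int.floor_le _
    · rw [← div_lt_iff₀' hP]; exact Int.lt_floor_add_one _
  set m := α + P * (z + 1 / 2) with hm
  have hm_far : ∀ q : ℤ, R ≤ |m - (α + P * q)| := fun q => by
    rw [show m - (α + P * q) = P * ↑(z - q) + P / 2 by push_cast; ring]
    exact le_abs_mul_add_of_le hP (by linarith) (by linarith) _
  by_cases hgood : ∀ q : ℤ, R ≤ |m - (β + 2 * P * q)|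
  · exact ⟨m, by rw [abs_le]; constructor <;> linarith, hm_far, hgood⟩
  push Not at hgood
  obtain ⟨q₀, hq₀⟩ := hgood
  set e := m - (β + 2 * P * q₀)
  have he_lt := abs_lt.mp hq₀
  rcases le_or_gt m u with hum | hum
  · refine ⟨α + P * (z + 1) + R, by rw [abs_le]; constructor <;> linarith,
      fun q => ?_, fun q => ?_⟩
    · rw [show α + P * (z + 1) + R - (α + P * q) = P * ↑(z + 1 - q) + R by push_cast; ring]
      exact le_abs_mul_add_of_le hP le_rfl (by linarith) _
    · rw [show α + P * (z + 1) + R - (β + 2 * P * q) = 2 * P * ↑(q₀ - q) + (e + P / 2 + R) by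
        push_cast; ring]
      exact le_abs_mul_add_of_le (by linarith) (by linarith) (by linarith) _
  · refine ⟨α + P * z - R, by rw [abs_le]; constructor <;> linarith,
      fun q => ?_, fun q => ?_⟩
    · rw [show α + P * z - R - (α + P * q) = P * ↑(z - q - 1) + (P - R) by push_cast; ring]
      exact le_abs_mul_add_of_le hP (by linarith) le_rfl _
    · rw [show α + P * z - R - (β + 2 * P * q)
          = 2 * P * ↑(q₀ - q - 1) + (e + 3 * P / 2 - R) by push_cast; ring]
      exact le_abs_mul_add_of_le (by linarith) (by linarith) (by linarith) _

lemma mFun_le_one {n : ℕ} (x : E n) : mFun x ≤ 1 := by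
  unfold mFun
  split_ifs with h
  · exact le_rfl
  · exact inv_le_one_of_one_le₀ (by linarith)

lemma mFun_eq_inv {n : ℕ} {x : E n} (h : 1 < ‖x‖) : mFun x = ‖x‖⁻¹ :=
  if_neg (not_le.2 h)

lemma notMem_plusC_of_forall_le_dist {n : ℕ} {α : ℝ} {A : Set (E n)} {z : E n}
    (h : ∀ a ∈ A, α * mFun z ≤ dist z a) : z ∉ plusC n α A := by
  rintro ⟨r, -, hr, a, haz, haA⟩
  linarith [h a haA, mem_ball'.1 haz]

lemma norm_ofLp_mem_Icc_of_mem_layer {n l : ℕ} {a : E n} (ha : a ∈ layer n (l + 1)) :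
    ‖WithLp.ofLp a‖ ∈ Icc ((2 : ℝ) ^ l) (2 ^ (l + 1)) := by
  simp only [layer, Nat.add_one_ne_zero, if_false, Nat.add_sub_cancel, mem_sdiff, mem_ofPred_eq,
    mem_Ico, not_forall, not_and_or, not_le, not_lt] at ha
  obtain ⟨hbox, j, hj⟩ := ha
  constructor
  · refine le_trans ?_ (norm_le_pi_norm (WithLp.ofLp a) j)
    rw [Real.norm_eq_abs, le_abs]
    rcases hj with hj | hj
    · right; linarith
    · left; exact hj
  · refine (pi_norm_le_iff_of_nonneg (by positivity)).2 fun j => ?_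
    rw [Real.norm_eq_abs, abs_le]
    exact ⟨(hbox j).1, (hbox j).2.le⟩

lemma exists_abs_sub_le_of_mem_dyadicCube {n : ℕ} {m : ℤ} {v : Fin n → ℤ} {a : E n}
    (ha : a ∈ dyadicCube n m v) (j : Fin n) (M : ℤ) :
    ∃ q : ℤ, |a j - 2 ^ (-m) * (((v j % M : ℤ) : ℝ) + 1 / 2 + M * q)| ≤ 2 ^ (-m) / 2 := by
  refine ⟨v j / M, ?_⟩
  have hv : ((v j % M : ℤ) : ℝ) + M * (v j / M : ℤ) = v j := by
    exact_mod_cast Int.emod_add_mul_ediv (v j) M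
  obtain ⟨h₁, h₂⟩ := ha j
  rw [abs_le]
  constructor <;> nlinarith [zpow_pos (two_pos (α := ℝ)) (-m)]

lemma sub_le_abs_sub_of_mem_dyadicCube {n : ℕ} {m : ℤ} {v : Fin n → ℤ} {a : E n}
    (ha : a ∈ dyadicCube n m v) (j : Fin n) (M : ℤ) {t R : ℝ}
    (ht : ∀ q : ℤ, R ≤ |t - 2 ^ (-m) * (((v j % M : ℤ) : ℝ) + 1 / 2 + M * q)|) :
    R - 2 ^ (-m) / 2 ≤ |t - a j| := by
  obtain ⟨q, hq⟩ := exists_abs_sub_le_of_mem_dyadicCube ha j M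
  have := abs_sub_le t (a j) (2 ^ (-m) * (((v j % M : ℤ) : ℝ) + 1 / 2 + M * q))
  linarith [ht q]

lemma exists_scale_of_mem_plusC {n p : ℕ} {i : Fin n → ℤ} (hp : 2 ≤ p) {x : E n}
    (hx : x ∈ plusC n (2 ^ p) (Ap n p i)) :
    ∃ k, p + 1 ≤ k ∧ (2 : ℝ) ^ k / 2 + 2 ^ p - 1 ≤ ‖WithLp.ofLp x‖ ∧
      ‖WithLp.ofLp x‖ ≤ 3 * 2 ^ k / 2 := by
  obtain ⟨r, -, hr, w, hwx, hwA⟩ := hx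
  simp only [Ap, mem_iUnion] at hwA
  obtain ⟨l, hl, v, hsub, -, hw⟩ := hwA
  obtain ⟨k, rfl⟩ : ∃ k, l = k + 1 := ⟨l - 1, by omega⟩
  obtain ⟨hw₁, hw₂⟩ := norm_ofLp_mem_Icc_of_mem_layer (hsub hw)
  have hπ : (4 : ℝ) ≤ 2 ^ p := by
    calc (4 : ℝ) = 2 ^ 2 := by norm_num
      _ ≤ 2 ^ p := pow_le_pow_right₀ one_le_two hp
  have hK : 2 * (2 : ℝ) ^ p ≤ 2 ^ k := by
    calc 2 * (2 : ℝ) ^ p = 2 ^ (p + 1) := by ring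
      _ ≤ 2 ^ k := pow_le_pow_right₀ one_le_two (by omega)
  have hxw := abs_le.1 (PiLp.abs_norm_ofLp_sub_norm_ofLp_le_dist x w)
  have hdist : dist x w < 2 ^ p * mFun x := (mem_ball'.1 hwx).trans_le hr
  have hx₁ : 2 ^ p ≤ ‖x‖ := by
    nlinarith [PiLp.norm_ofLp_le x, mFun_le_one x]
  have hdist₁ : dist x w ≤ 1 := by
    rw [mFun_eq_inv (by linarith), ← div_eq_mul_inv, lt_div_iff₀ (by linarith)] at hdist
    nlinarith [dist_nonneg (x := x) (y := w)]
  by_cases hW : ‖WithLp.ofLp x‖ ≤ 3 * 2 ^ k / 2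
  · exact ⟨k, by omega, by linarith, hW⟩
  · refine ⟨k + 1, by omega, ?_, ?_⟩ <;> rw [pow_succ] at * <;> linarith

section ShiftBounds

/- With `π = 2^p`, `K = 2^k` and `W` the sup-norm of `x`: `π / (W - 4)` bounds `π m(y)` for
`|x - y| ≤ 4`, `1 / (2K)` is half the side of a cube of layer `k`, and
`4π / K + (π / (W - 4) + 1 / (2K))` is the largest shift of a coordinate of `x`. -/
variable {π K W : ℝ}

lemma two_mul_clearance_le_period (hπ : 4 ≤ π) (hK : 2 * π ≤ K) (hW : K / 2 + π - 1 ≤ W) :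
    2 * (π / (W - 4) + 1 / (2 * K)) ≤ 8 * π / K := by
  have hW4 : 0 < W - 4 := by linarith
  have hK0 : 0 < K := by linarith
  have key : 2 * π * K ≤ (8 * π - 1) * (W - 4) := by
    nlinarith [mul_le_mul_of_nonneg_left hW (by linarith : (0:ℝ) ≤ 8 * π - 1),
      mul_le_mul_of_nonneg_left hK (by linarith : (0:ℝ) ≤ 2 * π - 1 / 2)]
  have : 2 * (π / (W - 4) + 1 / (2 * K)) = (2 * π * K + (W - 4)) / (K * (W - 4)) := by
    field_simp
  rw [this, div_le_div_iff₀ (by positivity) hK0]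
  nlinarith

lemma shift_le_four (hπ : 4 ≤ π) (hK : 2 * π ≤ K) (hW : K / 2 + π - 1 ≤ W) :
    4 * π / K + (π / (W - 4) + 1 / (2 * K)) ≤ 4 := by
  have hW4 : 0 < W - 4 := by linarith
  have hK0 : 0 < K := by linarith
  have h₁ : 4 * π / K ≤ 2 := by rw [div_le_iff₀ hK0]; linarith
  have h₂ : π / (W - 4) ≤ 4 / 3 := by rw [div_le_iff₀ hW4]; linarith
  have h₃ : 1 / (2 * K) ≤ 1 / 16 := by
    rw [div_le_div_iff₀ (by positivity) (by norm_num)]; linarith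
  linarith

lemma shift_le_eight_mul_div (hπ : 4 ≤ π) (hK : 2 * π ≤ K) (hW : K / 2 + π - 1 ≤ W)
    (hW' : W ≤ 3 * K / 2) :
    4 * π / K + (π / (W - 4) + 1 / (2 * K)) ≤ 8 * π / W := by
  have hW4 : 0 < W - 4 := by linarith
  have hK0 : 0 < K := by linarith
  have ha := sub_nonneg.2 hW
  have hb := sub_nonneg.2 hW'
  have hk := sub_nonneg.2 hK
  have hp := sub_nonneg.2 hπ
  have key : (8 * π + 1) * W * (W - 4) + 2 * π * K * W ≤ 16 * π * K * (W - 4) := by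
    nlinarith [mul_nonneg (mul_nonneg ha hb) (by linarith : (0:ℝ) ≤ 8 * π + 1),
      mul_nonneg ha hk, mul_nonneg hb hk, mul_nonneg ha hp, mul_nonneg hb hp, mul_nonneg hk hp,
      mul_nonneg (mul_nonneg ha hk) hp, mul_nonneg (mul_nonneg hb hk) hp,
      mul_nonneg (mul_nonneg ha hp) hp, mul_nonneg (mul_nonneg hb hp) hp,
      mul_nonneg (mul_nonneg hk hp) hp, mul_nonneg (mul_nonneg hk hk) hp]
  have : 4 * π / K + (π / (W - 4) + 1 / (2 * K))
      = ((8 * π + 1) * (W - 4) + 2 * π * K) / (2 * K * (W - 4)) := by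
    field_simp; ring
  rw [this, div_le_div_iff₀ (by positivity) (by linarith)]
  nlinarith

lemma shift_add_le_two_mul_sub (hπ : 4 ≤ π) (hK : 2 * π ≤ K) (hW : K / 2 + π - 1 ≤ W)
    (hW' : W ≤ 3 * K / 2) :
    4 * π / K + (π / (W - 4) + 1 / (2 * K)) + π / (W - 4) ≤ 2 * K - W := by
  have hW4 : 0 < W - 4 := by linarith
  have hK0 : 0 < K := by linarith
  have : 4 * π / K + (π / (W - 4) + 1 / (2 * K)) + π / (W - 4)
      = (8 * π + 1) / (2 * K) + 2 * π / (W - 4) := by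
    field_simp; ring
  rw [this, div_add_div _ _ (by positivity) hW4.ne', div_le_iff₀ (by positivity)]
  nlinarith [mul_nonneg (sub_nonneg.2 hW) (sub_nonneg.2 hW'), mul_nonneg (sub_nonneg.2 hK) hK0.le,
    mul_nonneg (sub_nonneg.2 hπ) hK0.le,
    mul_nonneg (mul_nonneg (sub_nonneg.2 hW) (sub_nonneg.2 hW')) hK0.le]

lemma shift_add_le_sub_half (hπ : 4 ≤ π) (hK : 8 * π ≤ K) (hW : K / 2 + π - 1 ≤ W) :
    4 * π / K + (π / (W - 4) + 1 / (2 * K)) + π / (W - 4) ≤ W - K / 2 := by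
  have hW4 : 0 < W - 4 := by linarith
  have hK0 : 0 < K := by linarith
  have h₁ : 4 * π / K ≤ 1 / 2 := by rw [div_le_iff₀ hK0]; linarith
  have h₂ : π / (W - 4) ≤ 1 / 3 := by rw [div_le_iff₀ hW4]; linarith
  have h₃ : 1 / (2 * K) ≤ 1 / 16 := by
    rw [div_le_div_iff₀ (by positivity) (by norm_num)]; linarith
  linarith

end ShiftBounds

lemma exists_notMem_plusC_dist_le {n p k : ℕ} (i : Fin n → ℤ) (hp : 2 ≤ p)
    (hk : p + 1 ≤ k) {x : E n} (hlo : (2 : ℝ) ^ k / 2 + 2 ^ p - 1 ≤ ‖WithLp.ofLp x‖)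
    (hhi : ‖WithLp.ofLp x‖ ≤ 3 * 2 ^ k / 2) :
    ∃ y ∉ plusC n (2 ^ p) (Ap n p i), dist x y ≤ 8 * 2 ^ p / ‖WithLp.ofLp x‖ := by
  set π : ℝ := 2 ^ p
  set K : ℝ := 2 ^ k with hKdef
  set W := ‖WithLp.ofLp x‖
  have hπ : 4 ≤ π := by
    calc (4 : ℝ) = 2 ^ 2 := by norm_num
      _ ≤ 2 ^ p := pow_le_pow_right₀ one_le_two hp
  have hK : 2 * π ≤ K := by
    calc 2 * π = 2 ^ (p + 1) := by ring
      _ ≤ 2 ^ k := pow_le_pow_right₀ one_le_two hk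
  -- any coordinate will do
  obtain ⟨j₀, -⟩ : ∃ j, WithLp.ofLp x j ≠ 0 :=
    Function.ne_iff.1 (norm_pos_iff.1 (by linarith : (0 : ℝ) < W))
  set M : ℤ := 2 ^ (p + 4)
  have hM : (M : ℝ) = 16 * π := by simp only [M, π]; push_cast; ring
  set r : ℤ := i j₀ - 1
  set h : ℝ := 1 / (2 * K) with hh
  set D := π / (W - 4)
  set P := 8 * π / K with hP
  have hW4 : 0 < W - 4 := by linarith
  obtain ⟨s, hsx, hfam₁, hfam₂⟩ := exists_near_far_from_lattices (R := D + h)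
    (by positivity) (by positivity)
    (hP ▸ two_mul_clearance_le_period hπ hK hlo) (h * (r + 1 / 2)) (2 * h * (r + 1 / 2)) (x j₀)
  have hshift : P / 2 + (D + h) = 4 * π / K + (π / (W - 4) + 1 / (2 * K)) := by ring
  set y := x + (s - x j₀) • EuclideanSpace.single j₀ (1 : ℝ)
  have hxy : dist x y = |s - x j₀| := by
    rw [dist_comm, dist_eq_norm, add_sub_cancel_left, norm_smul, PiLp.norm_single, norm_one,
      mul_one, Real.norm_eq_abs]
  have hyj : y j₀ = s := by simp [y]
  have hxy₄ : dist x y ≤ 4 := by linarith [shift_le_four hπ hK hlo]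
  have hmy : π * mFun y ≤ D := by
    have hy : W - 4 ≤ ‖y‖ := by
      linarith [PiLp.norm_ofLp_le x, norm_sub_norm_le x y, dist_eq_norm x y]
    rw [mFun_eq_inv (by linarith), ← div_eq_mul_inv]
    exact div_le_div_of_nonneg_left (by positivity) (by linarith) hy
  refine ⟨y, notMem_plusC_of_forall_le_dist fun a ha => hmy.trans ?_,
    by linarith [shift_le_eight_mul_div hπ hK hlo hhi]⟩
  simp only [Ap, mem_iUnion] at ha
  obtain ⟨l, hl, v, hsub, hlab, ha⟩ := ha
  obtain ⟨l, rfl⟩ : ∃ l', l = l' + 1 := ⟨l - 1, by omega⟩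
  obtain ⟨ha₁, ha₂⟩ := norm_ofLp_mem_Icc_of_mem_layer (hsub ha)
  have hv : v j₀ % M = r := by have := hlab j₀; simp only [M, r]; omega
  have hya : |s - a j₀| ≤ dist y a := by
    rw [← hyj, ← Real.dist_eq]; exact PiLp.dist_apply_le y a j₀
  have hxa := abs_le.1 (PiLp.abs_norm_ofLp_sub_norm_ofLp_le_dist x a)
  have hxya := dist_triangle x y a
  rcases (by omega : l + 2 ≤ k ∨ l + 1 = k ∨ l = k ∨ k + 1 ≤ l) with hlk | rfl | rfl | hlk
  · have ha₂' : (2 : ℝ) ^ (l + 1) ≤ K / 2 := by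
      rw [le_div_iff₀ two_pos, ← pow_succ]; exact pow_le_pow_right₀ one_le_two hlk
    have hK' : 8 * π ≤ K := by
      calc 8 * π = 2 ^ (p + 3) := by ring
        _ ≤ 2 ^ k := pow_le_pow_right₀ one_le_two (by omega)
    linarith [shift_add_le_sub_half hπ hK' hlo]
  · have hscale : (2 : ℝ) ^ (-((l + 1 : ℕ) : ℤ)) = 2 * h := by
      rw [zpow_neg, zpow_natCast, hh, hKdef]; field_simp
    have := sub_le_abs_sub_of_mem_dyadicCube ha j₀ M (t := s) (R := D + h) fun q => by
      rw [hv, hscale, show 2 * h * (r + 1 / 2 + M * q) = 2 * h * (r + 1 / 2) + 2 * P * q by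
        rw [hM, hP, hh]; field_simp; ring]
      exact hfam₂ q
    rw [hscale] at this
    linarith
  · have hscale : (2 : ℝ) ^ (-((l + 1 : ℕ) : ℤ)) = h := by
      rw [zpow_neg, zpow_natCast, hh, hKdef, pow_succ]; field_simp
    have := sub_le_abs_sub_of_mem_dyadicCube ha j₀ M (t := s) (R := D + h) fun q => by
      rw [hv, hscale, show h * (r + 1 / 2 + M * q) = h * (r + 1 / 2) + P * q by
        rw [hM, hP, hh]; field_simp; ring]
      exact hfam₁ q
    rw [hscale] at this
    linarith [show 0 < h by rw [hh]; positivity]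
  · have ha₁' : 2 * K ≤ (2 : ℝ) ^ l := by
      rw [← pow_succ']; exact pow_le_pow_right₀ one_le_two hlk
    linarith [shift_add_le_two_mul_sub hπ hK hlo hhi]

theorem stmt7_general (n : ℕ) (p : ℕ) (hp : 2 ≤ p) (i : Fin n → ℤ) :
    AdmWhitney n (2 ^ (p + 3) * Real.sqrt n) (plusC n (2 ^ p) (Ap n p i)) := by
  intro x hx
  obtain ⟨k, hk, hlo, hhi⟩ := exists_scale_of_mem_plusC hp hx
  obtain ⟨y, hy, hxy⟩ := exists_notMem_plusC_dist_le i hp hk hlo hhi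
  have hW : 1 < ‖WithLp.ofLp x‖ := by
    have : (2 : ℝ) ≤ 2 ^ p := le_self_pow₀ one_le_two (by omega)
    linarith [pow_pos (two_pos (α := ℝ)) k]
  have hnorm : ‖x‖ ≤ √n * ‖WithLp.ofLp x‖ := by
    simpa using EuclideanSpace.norm_le_sqrt_card_mul_norm_ofLp x
  have hx₁ : 1 < ‖x‖ := hW.trans_le (PiLp.norm_ofLp_le x)
  calc infDist x (plusC n (2 ^ p) (Ap n p i))ᶜ ≤ dist x y := infDist_le_dist_of_mem hy
    _ ≤ 8 * 2 ^ p / ‖WithLp.ofLp x‖ := hxy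
    _ ≤ 8 * 2 ^ p * √n / ‖x‖ := by
      rw [div_le_div_iff₀ (by linarith) (by linarith)]
      nlinarith [pow_pos (two_pos (α := ℝ)) p]
    _ = 2 ^ (p + 3) * √n * mFun x := by
      rw [mFun_eq_inv hx₁, pow_add]; ring

/-- For `p ≥ 2` and `i ∈ {1,…,2^{p+4}}ⁿ`, the set `A_p^{(i)} + 𝓒_{2^p}` is
`2^{p+3}√n`-admissible Whitney. -/
theorem stmt7 (n : ℕ) (hn : 1 ≤ n) (p : ℕ) (hp : 2 ≤ p)
    (i : Fin n → ℤ) (hi : ∀ j, 1 ≤ i j ∧ i j ≤ 2 ^ (p + 4)) :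
    AdmWhitney n (2 ^ (p + 3) * Real.sqrt n) (plusC n (2 ^ p) (Ap n p i)) :=
  stmt7_general n p hp i
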